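/- Let (f_m) be a sequence in L^p(ν, X, Y) and f ∈ L^p_w(ν, X, Y), and define vector measures μ_m(E) = ∫_E ‖f_m‖ᵖ dν. If ‖f_m − f‖_{L^p_w(ν,X,Y)} → 0, then for every E ∈ 𝒜 the sequence (μ_m(E)) is Cauchy in Y, uniformly in E; indeed sup_{E∈𝒜} ‖μ_m(E) − μ_k(E)‖ ≤ sup_{‖y'‖≤1} ∫_Ω |‖f_m‖ᵖ − ‖f_k‖ᵖ| d|y'∘ν| ≤ C(‖f_m − f_k‖_{L^p_w}) → 0. -/

import Mathlib

/-!
Write `|y'ν|` for the variation of `y' ∘ ν`. Testing `μ_m(E) - μ_k(E)` against a norming functional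
`y'` of norm at most one bounds it by `∫ |‖f_m‖ᵖ - ‖f_k‖ᵖ| d|y'ν|`. The pointwise estimate
`|aᵖ - bᵖ| ≤ p (a + b)ᵖ⁻¹ |a - b|` (convexity of `t ↦ tᵖ`) and Hölder's inequality bound this by
`p (‖f_m‖ₚ + ‖f_k‖ₚ)ᵖ⁻¹ ‖f_m - f_k‖ₚ`, norms in `Lᵖ(|y'ν|)`, and the last factor is at most
`‖f_m - f‖_{Lᵖ_w} + ‖f_k - f‖_{Lᵖ_w}`. It remains to bound the weak norms of the `f_m` eventually,
which reduces to a single `f_N` with `‖f_N‖ᵖ` `ν`-integrable: by uniform boundedness its indefinite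
integral is bounded on `𝒜`, and splitting `Ω` along a Hahn decomposition of `y'ν` bounds
`∫ ‖f_N‖ᵖ d|y'ν|` by twice that bound.
-/

open MeasureTheory ENNReal

variable {Ω X Y : Type*}

/-- The total variation measure of the scalar measure `y' ∘ ν`. -/
noncomputable def scalarVar [MeasurableSpace Ω] [NormedAddCommGroup Y] [NormedSpace ℝ Y]
    (ν : VectorMeasure Ω Y) (y' : Y →L[ℝ] ℝ) : Measure Ω :=
  SignedMeasure.totalVariation (VectorMeasure.mapRange ν (y' : Y →ₗ[ℝ] ℝ).toAddMonoidHom y'.continuous)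

/-- The `L^p_w(ν, X, Y)` norm. -/
noncomputable def lpwNorm [MeasurableSpace Ω] [NormedAddCommGroup X] [NormedAddCommGroup Y]
    [NormedSpace ℝ Y] (ν : VectorMeasure Ω Y) (p : ℝ) (f : Ω → X) : ℝ≥0∞ :=
  ⨆ y' ∈ {y' : Y →L[ℝ] ℝ | ‖y'‖ ≤ 1},
    (∫⁻ ω, (‖f ω‖₊ : ℝ≥0∞) ^ p ∂ scalarVar ν y') ^ (1 / p)

/-- Membership in `L^p_w(ν, X, Y)`. -/
def MemLpw [MeasurableSpace Ω] [NormedAddCommGroup X] [NormedAddCommGroup Y]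
    [NormedSpace ℝ Y] (ν : VectorMeasure Ω Y) (p : ℝ) (f : Ω → X) : Prop :=
  StronglyMeasurable f ∧
    ∀ y' : Y →L[ℝ] ℝ, (∫⁻ ω, (‖f ω‖₊ : ℝ≥0∞) ^ p ∂ scalarVar ν y') < ∞

/-- The semivariation of the vector measure `ν`. -/
noncomputable def semivar [MeasurableSpace Ω] [NormedAddCommGroup Y] [NormedSpace ℝ Y]
    (ν : VectorMeasure Ω Y) (E : Set Ω) : ℝ≥0∞ :=
  ⨆ y' ∈ {y' : Y →L[ℝ] ℝ | ‖y'‖ ≤ 1}, scalarVar ν y' E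

/-- The integral `∫_E h ds` of a real function with respect to a signed measure. -/
noncomputable def signedIntegral [MeasurableSpace Ω] (s : SignedMeasure Ω) (E : Set Ω)
    (h : Ω → ℝ) : ℝ :=
  (∫ ω in E, h ω ∂ s.toJordanDecomposition.posPart) -
    (∫ ω in E, h ω ∂ s.toJordanDecomposition.negPart)

/-- The scalar signed measure `y' ∘ ν`. -/
noncomputable def scalarSigned [MeasurableSpace Ω] [NormedAddCommGroup Y] [NormedSpace ℝ Y]
    (ν : VectorMeasure Ω Y) (y' : Y →L[ℝ] ℝ) : SignedMeasure Ω :=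
  VectorMeasure.mapRange ν (y' : Y →ₗ[ℝ] ℝ).toAddMonoidHom y'.continuous

/-- `ν`-integrability in the sense of Lewis. -/
def NuIntegrable [MeasurableSpace Ω] [NormedAddCommGroup Y] [NormedSpace ℝ Y]
    (ν : VectorMeasure Ω Y) (h : Ω → ℝ) : Prop :=
  (∀ y' : Y →L[ℝ] ℝ, Integrable h (scalarVar ν y')) ∧
    ∀ E : Set Ω, MeasurableSet E → ∃ I : Y, ∀ y' : Y →L[ℝ] ℝ,
      y' I = signedIntegral (scalarSigned ν y') E h

open Filter Topology

theorem rpow_sub_rpow_le_of_le {p a b : ℝ} (hp : 1 ≤ p) (hb : 0 ≤ b) (hba : b ≤ a) :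
    a ^ p - b ^ p ≤ p * a ^ (p - 1) * (a - b) := by
  rcases hba.eq_or_lt with rfl | hba
  · simp
  have hslope := (convexOn_rpow hp).slope_le_of_hasDerivAt hb (hb.trans hba.le) hba
    (Real.hasDerivAt_rpow_const (Or.inr hp))
  rwa [slope_def_field, div_le_iff₀ (sub_pos.2 hba)] at hslope

theorem abs_rpow_sub_rpow_le {p a b : ℝ} (hp : 1 ≤ p) (ha : 0 ≤ a) (hb : 0 ≤ b) :
    |a ^ p - b ^ p| ≤ p * (a + b) ^ (p - 1) * |a - b| := by
  wlog hba : b ≤ a generalizing a b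
  · rw [abs_sub_comm, abs_sub_comm a, add_comm]
    exact this hb ha (le_of_not_ge hba)
  rw [abs_of_nonneg (sub_nonneg.2 (Real.rpow_le_rpow hb hba (by linarith))),
    abs_of_nonneg (sub_nonneg.2 hba)]
  calc a ^ p - b ^ p ≤ p * a ^ (p - 1) * (a - b) := rpow_sub_rpow_le_of_le hp hb hba
    _ ≤ p * (a + b) ^ (p - 1) * (a - b) := by
      gcongr
      linarith

theorem enorm_norm_rpow_sub_norm_rpow_le {E : Type*} [SeminormedAddCommGroup E] {p : ℝ} (hp : 1 ≤ p)
    (x y : E) :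
    ‖‖x‖ ^ p - ‖y‖ ^ p‖ₑ ≤ ENNReal.ofReal p * (‖x - y‖ₑ * (‖x‖ₑ + ‖y‖ₑ) ^ (p - 1)) := by
  have h : |‖x‖ ^ p - ‖y‖ ^ p| ≤ p * (‖x - y‖ * (‖x‖ + ‖y‖) ^ (p - 1)) := by
    rw [mul_comm ‖x - y‖, ← mul_assoc]
    refine (abs_rpow_sub_rpow_le hp (norm_nonneg x) (norm_nonneg y)).trans ?_
    gcongr
    exact abs_norm_sub_norm_le x y
  rw [Real.enorm_eq_ofReal_abs]
  refine (ENNReal.ofReal_le_ofReal h).trans_eq ?_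
  rw [ENNReal.ofReal_mul (by linarith), ENNReal.ofReal_mul (by positivity),
    ← ENNReal.ofReal_rpow_of_nonneg (by positivity) (by linarith),
    ENNReal.ofReal_add (norm_nonneg _) (norm_nonneg _), ofReal_norm, ofReal_norm, ofReal_norm]

theorem exists_forall_ge_norm_sub_le_of_enorm_sub_le_add {ι : Type*} [SeminormedAddCommGroup Y]
    {s : Set ι} {x : ℕ → ι → Y} {b : ℕ → ℝ≥0∞} (hb : Tendsto b atTop (𝓝 0)) {N : ℕ}
    (hx : ∀ m ≥ N, ∀ k ≥ N, ∀ i ∈ s, ‖x m i - x k i‖ₑ ≤ b m + b k) {ε : ℝ} (hε : 0 < ε) :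
    ∃ N', ∀ m ≥ N', ∀ k ≥ N', ∀ i ∈ s, ‖x m i - x k i‖ ≤ ε := by
  obtain ⟨N', hN'⟩ :=
    eventually_atTop.1 (hb.eventually (gt_mem_nhds (ofReal_pos.2 (half_pos hε))))
  refine ⟨max N N', fun m hm k hk i hi => ?_⟩
  rw [← ofReal_le_ofReal_iff hε.le, ofReal_norm]
  calc ‖x m i - x k i‖ₑ ≤ b m + b k := hx m (le_of_max_le_left hm) k (le_of_max_le_left hk) i hi
    _ ≤ ENNReal.ofReal (ε / 2) + ENNReal.ofReal (ε / 2) :=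
      add_le_add (hN' m (le_of_max_le_right hm)).le (hN' k (le_of_max_le_right hk)).le
    _ = ENNReal.ofReal ε := by rw [← ofReal_add (by positivity) (by positivity), add_halves]

theorem lintegral_mul_rpow_sub_one_le {α : Type*} [MeasurableSpace α] {μ : Measure α} {p : ℝ}
    (hp : 1 ≤ p) {f g : α → ℝ≥0∞} (hf : AEMeasurable f μ) (hg : AEMeasurable g μ) :
    ∫⁻ a, f a * g a ^ (p - 1) ∂μ ≤
      (∫⁻ a, f a ^ p ∂μ) ^ (1 / p) * ((∫⁻ a, g a ^ p ∂μ) ^ (1 / p)) ^ (p - 1) := by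
  rcases hp.eq_or_lt with rfl | hp
  · simp
  refine (ENNReal.lintegral_mul_rpow_le_lintegral_rpow_mul_lintegral_rpow
    (Real.HolderConjugate.conjExponent hp) hf hg).trans_eq ?_
  rw [← ENNReal.rpow_mul, Real.conjExponent]
  congr 2
  field_simp

theorem lintegral_enorm_norm_rpow_sub_le {α E : Type*} [MeasurableSpace α]
    [SeminormedAddCommGroup E]
    {μ : Measure α} {p : ℝ} (hp : 1 ≤ p) {g h : α → E} (hg : AEStronglyMeasurable g μ)
    (hh : AEStronglyMeasurable h μ) :
    ∫⁻ ω, ‖‖g ω‖ ^ p - ‖h ω‖ ^ p‖ₑ ∂μ ≤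
      ENNReal.ofReal p * (eLpNorm' (g - h) p μ * (eLpNorm' g p μ + eLpNorm' h p μ) ^ (p - 1)) := by
  calc ∫⁻ ω, ‖‖g ω‖ ^ p - ‖h ω‖ ^ p‖ₑ ∂μ
      ≤ ∫⁻ ω, ENNReal.ofReal p * (‖g ω - h ω‖ₑ * (‖g ω‖ₑ + ‖h ω‖ₑ) ^ (p - 1)) ∂μ :=
        lintegral_mono fun ω => enorm_norm_rpow_sub_norm_rpow_le hp _ _
    _ = ENNReal.ofReal p * ∫⁻ ω, ‖g ω - h ω‖ₑ * (‖g ω‖ₑ + ‖h ω‖ₑ) ^ (p - 1) ∂μ :=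
        lintegral_const_mul' _ _ ofReal_ne_top
    _ ≤ _ := by
      gcongr
      refine (lintegral_mul_rpow_sub_one_le hp (hg.sub hh).enorm (hg.enorm.add hh.enorm)).trans ?_
      exact mul_le_mul_right
        (ENNReal.rpow_le_rpow (ENNReal.lintegral_Lp_add_le hg.enorm hh.enorm hp) (by linarith)) _

theorem exists_norm_le_of_forall_exists_norm_dual_le {𝕜 E ι : Type*} [RCLike 𝕜]
    [SeminormedAddCommGroup E] [NormedSpace 𝕜 E] (x : ι → E)
    (h : ∀ y' : StrongDual 𝕜 E, ∃ C, ∀ i, ‖y' (x i)‖ ≤ C) : ∃ C, ∀ i, ‖x i‖ ≤ C := by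
  obtain ⟨C, hC⟩ := banach_steinhaus (g := fun i => NormedSpace.inclusionInDoubleDual 𝕜 E (x i)) h
  exact ⟨C, fun i => (NormedSpace.inclusionInDoubleDualLi 𝕜).norm_map (x i) ▸ hC i⟩

section SignedIntegral

variable [MeasurableSpace Ω] {s : SignedMeasure Ω} {E : Set Ω} {g h : Ω → ℝ}

theorem signedIntegral_sub (hg : Integrable g s.totalVariation)
    (hh : Integrable h s.totalVariation) :
    signedIntegral s E (g - h) = signedIntegral s E g - signedIntegral s E h := by
  simp only [signedIntegral, Pi.sub_apply]
  rw [integral_sub hg.left_of_add_measure.restrict hh.left_of_add_measure.restrict,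
    integral_sub hg.right_of_add_measure.restrict hh.right_of_add_measure.restrict]
  ring

theorem enorm_signedIntegral_le (s : SignedMeasure Ω) (E : Set Ω) (g : Ω → ℝ) :
    ‖signedIntegral s E g‖ₑ ≤ ∫⁻ ω, ‖g ω‖ₑ ∂s.totalVariation :=
  calc ‖signedIntegral s E g‖ₑ
      ≤ ‖∫ ω in E, g ω ∂s.toJordanDecomposition.posPart‖ₑ
        + ‖∫ ω in E, g ω ∂s.toJordanDecomposition.negPart‖ₑ := enorm_sub_le
    _ ≤ ∫⁻ ω in E, ‖g ω‖ₑ ∂s.toJordanDecomposition.posPart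
        + ∫⁻ ω in E, ‖g ω‖ₑ ∂s.toJordanDecomposition.negPart :=
      add_le_add (enorm_integral_le_lintegral_enorm _) (enorm_integral_le_lintegral_enorm _)
    _ ≤ ∫⁻ ω, ‖g ω‖ₑ ∂s.toJordanDecomposition.posPart
        + ∫⁻ ω, ‖g ω‖ₑ ∂s.toJordanDecomposition.negPart :=
      add_le_add (setLIntegral_le_lintegral _ _) (setLIntegral_le_lintegral _ _)
    _ = ∫⁻ ω, ‖g ω‖ₑ ∂s.totalVariation := (lintegral_add_measure _ _ _).symm

theorem abs_signedIntegral_le (hg : HasFiniteIntegral g s.totalVariation) :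
    |signedIntegral s E g| ≤ (∫⁻ ω, ‖g ω‖ₑ ∂s.totalVariation).toReal :=
  (ENNReal.ofReal_le_iff_le_toReal hg.ne).1 <| by
    rw [← Real.enorm_eq_ofReal_abs]
    exact enorm_signedIntegral_le s E g

theorem integral_totalVariation_le_two_mul (hg : Integrable g s.totalVariation) {M : ℝ}
    (hM : ∀ E, MeasurableSet E → |signedIntegral s E g| ≤ M) :
    ∫ ω, g ω ∂s.totalVariation ≤ 2 * M := by
  -- `u` is a Hahn decomposition, so `∫ g d|s|` is the difference of the integrals over `uᶜ` and `u`
  obtain ⟨u, hu, hpos, hneg⟩ := s.toJordanDecomposition.mutuallySingular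
  have hpos' := Measure.restrict_eq_zero.2 hpos
  have hneg' := Measure.restrict_eq_zero.2 hneg
  have hposPart : signedIntegral s uᶜ g = ∫ ω, g ω ∂s.toJordanDecomposition.posPart := by
    rw [signedIntegral, ← integral_add_compl hu hg.left_of_add_measure, hpos', hneg']
    simp
  have hnegPart : signedIntegral s u g = -∫ ω, g ω ∂s.toJordanDecomposition.negPart := by
    rw [signedIntegral, ← integral_add_compl hu hg.right_of_add_measure, hpos', hneg']
    simp
  have hMpos := (abs_le.1 (hM _ hu.compl)).2
  have hMneg := (abs_le.1 (hM _ hu)).1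
  rw [SignedMeasure.totalVariation, integral_add_measure hg.left_of_add_measure
    hg.right_of_add_measure]
  linarith

end SignedIntegral

section WeakLp

variable [MeasurableSpace Ω] [NormedAddCommGroup X] [NormedAddCommGroup Y] [NormedSpace ℝ Y]
  {ν : VectorMeasure Ω Y} {p : ℝ}

theorem eLpNorm'_le_lpwNorm (f : Ω → X) {y' : Y →L[ℝ] ℝ} (hy' : ‖y'‖ ≤ 1) :
    eLpNorm' f p (scalarVar ν y') ≤ lpwNorm ν p f :=
  le_iSup₂_of_le (f := fun z _ => eLpNorm' f p (scalarVar ν z)) y' hy' le_rfl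

theorem lpwNorm_add_le (hp : 1 ≤ p) {f g : Ω → X} (hf : StronglyMeasurable f)
    (hg : StronglyMeasurable g) : lpwNorm ν p (f + g) ≤ lpwNorm ν p f + lpwNorm ν p g :=
  iSup₂_le fun _ hy' => (eLpNorm'_add_le hf.aestronglyMeasurable hg.aestronglyMeasurable hp).trans
    (add_le_add (eLpNorm'_le_lpwNorm f hy') (eLpNorm'_le_lpwNorm g hy'))

theorem lpwNorm_sub_le (hp : 1 ≤ p) {f g : Ω → X} (hf : StronglyMeasurable f)
    (hg : StronglyMeasurable g) : lpwNorm ν p (f - g) ≤ lpwNorm ν p f + lpwNorm ν p g :=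
  iSup₂_le fun _ hy' => by
    rw [sub_eq_add_neg]
    refine (eLpNorm'_add_le hf.aestronglyMeasurable hg.aestronglyMeasurable.neg hp).trans ?_
    rw [eLpNorm'_neg]
    exact add_le_add (eLpNorm'_le_lpwNorm f hy') (eLpNorm'_le_lpwNorm g hy')

theorem lpwNorm_sub_le_sub_add_sub (hp : 1 ≤ p) {f g h : Ω → X} (hf : StronglyMeasurable f)
    (hg : StronglyMeasurable g) (hh : StronglyMeasurable h) :
    lpwNorm ν p (g - h) ≤ lpwNorm ν p (g - f) + lpwNorm ν p (h - f) := by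
  rw [← sub_sub_sub_cancel_right g h f]
  exact lpwNorm_sub_le hp (hg.sub hf) (hh.sub hf)

theorem exists_lpwNorm_le_of_tendsto (hp : 1 ≤ p) {f : Ω → X} {F : ℕ → Ω → X}
    (hf : StronglyMeasurable f) (hF : ∀ m, StronglyMeasurable (F m))
    (hfin : ∀ m, lpwNorm ν p (F m) ≠ ∞)
    (hconv : Tendsto (fun m => lpwNorm ν p (F m - f)) atTop (𝓝 0)) :
    ∃ D ≠ ∞, ∃ N, ∀ m ≥ N, lpwNorm ν p (F m) ≤ D := by
  obtain ⟨N, hN⟩ := eventually_atTop.1 (hconv.eventually (gt_mem_nhds one_pos))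
  refine ⟨lpwNorm ν p (F N) + 2, add_ne_top.2 ⟨hfin N, ofNat_ne_top⟩, N, fun m hm => ?_⟩
  calc lpwNorm ν p (F m)
      ≤ lpwNorm ν p (F N) + lpwNorm ν p (F m - F N) := by
        simpa only [add_sub_cancel] using lpwNorm_add_le hp (hF N) ((hF m).sub (hF N))
    _ ≤ lpwNorm ν p (F N) + (1 + 1) := add_le_add_right
        ((lpwNorm_sub_le_sub_add_sub hp hf (hF m) (hF N)).trans
          (add_le_add (hN m hm).le (hN N le_rfl).le)) _
    _ = lpwNorm ν p (F N) + 2 := by rw [one_add_one_eq_two]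

theorem lintegral_enorm_norm_rpow_sub_le_lpwNorm (hp : 1 ≤ p) {f g : Ω → X}
    (hf : StronglyMeasurable f) (hg : StronglyMeasurable g) {y' : Y →L[ℝ] ℝ} (hy' : ‖y'‖ ≤ 1) :
    ∫⁻ ω, ‖‖f ω‖ ^ p - ‖g ω‖ ^ p‖ₑ ∂scalarVar ν y' ≤
      ENNReal.ofReal p * (lpwNorm ν p (f - g) * (lpwNorm ν p f + lpwNorm ν p g) ^ (p - 1)) := by
  refine (lintegral_enorm_norm_rpow_sub_le hp hf.aestronglyMeasurable
    hg.aestronglyMeasurable).trans ?_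
  exact mul_le_mul_right (mul_le_mul' (eLpNorm'_le_lpwNorm _ hy') (ENNReal.rpow_le_rpow
    (add_le_add (eLpNorm'_le_lpwNorm f hy') (eLpNorm'_le_lpwNorm g hy')) (by linarith))) _

end WeakLp

section IndefiniteIntegral

variable [MeasurableSpace Ω] [NormedAddCommGroup X] [NormedAddCommGroup Y] [NormedSpace ℝ Y]
  {ν : VectorMeasure Ω Y}

def IsIndefiniteIntegral (ν : VectorMeasure Ω Y) (g : Ω → ℝ) (I : Set Ω → Y) : Prop :=
  ∀ E, MeasurableSet E → ∀ y' : Y →L[ℝ] ℝ, y' (I E) = signedIntegral (scalarSigned ν y') E g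

namespace IsIndefiniteIntegral

variable {g : Ω → ℝ} {I : Set Ω → Y}

theorem exists_norm_le (hI : IsIndefiniteIntegral ν g I)
    (hg : ∀ y' : Y →L[ℝ] ℝ, Integrable g (scalarVar ν y')) :
    ∃ M, ∀ E, MeasurableSet E → ‖I E‖ ≤ M := by
  obtain ⟨M, hM⟩ := exists_norm_le_of_forall_exists_norm_dual_le (𝕜 := ℝ)
    (fun E : {E : Set Ω // MeasurableSet E} => I E) fun y' =>
      ⟨_, fun E => (hI E E.2 y').symm ▸ abs_signedIntegral_le (hg y').2⟩
  exact ⟨M, fun E hE => hM ⟨E, hE⟩⟩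

theorem exists_integral_le (hI : IsIndefiniteIntegral ν g I)
    (hg : ∀ y' : Y →L[ℝ] ℝ, Integrable g (scalarVar ν y')) :
    ∃ C, ∀ y' : Y →L[ℝ] ℝ, ‖y'‖ ≤ 1 → ∫ ω, g ω ∂scalarVar ν y' ≤ C := by
  obtain ⟨M, hM⟩ := hI.exists_norm_le hg
  refine ⟨2 * M, fun y' hy' =>
    integral_totalVariation_le_two_mul (s := scalarSigned ν y') (hg y') fun E hE => ?_⟩
  rw [← hI E hE y', ← Real.norm_eq_abs]
  exact (y'.le_opNorm _).trans ((mul_le_of_le_one_left (norm_nonneg _) hy').trans (hM E hE))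

theorem enorm_sub_le {h : Ω → ℝ} {J : Set Ω → Y} (hI : IsIndefiniteIntegral ν g I)
    (hJ : IsIndefiniteIntegral ν h J) (hg : ∀ y' : Y →L[ℝ] ℝ, Integrable g (scalarVar ν y'))
    (hh : ∀ y' : Y →L[ℝ] ℝ, Integrable h (scalarVar ν y')) {B : ℝ≥0∞}
    (hgh : ∀ y' : Y →L[ℝ] ℝ, ‖y'‖ ≤ 1 → ∫⁻ ω, ‖g ω - h ω‖ₑ ∂scalarVar ν y' ≤ B)
    {E : Set Ω} (hE : MeasurableSet E) : ‖I E - J E‖ₑ ≤ B := by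
  obtain ⟨y', hy', hy'E⟩ := exists_dual_vector'' ℝ (I E - J E)
  have hsub : y' (I E - J E) = signedIntegral (scalarSigned ν y') E (g - h) := by
    rw [map_sub, hI E hE, hJ E hE, signedIntegral_sub (s := scalarSigned ν y') (hg y') (hh y')]
  calc ‖I E - J E‖ₑ = ‖y' (I E - J E)‖ₑ := by
        rw [hy'E, ← ofReal_norm, ← ofReal_norm, RCLike.ofReal_real_eq_id, id, norm_norm]
    _ ≤ ∫⁻ ω, ‖g ω - h ω‖ₑ ∂scalarVar ν y' := hsub ▸ enorm_signedIntegral_le _ _ _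
    _ ≤ B := hgh y' hy'

end IsIndefiniteIntegral

theorem lpwNorm_ne_top_of_isIndefiniteIntegral {p : ℝ} (hp : 0 < p) {F : Ω → X}
    {I : Set Ω → Y} (hI : IsIndefiniteIntegral ν (fun ω => ‖F ω‖ ^ p) I)
    (hF : ∀ y' : Y →L[ℝ] ℝ, Integrable (fun ω => ‖F ω‖ ^ p) (scalarVar ν y')) :
    lpwNorm ν p F ≠ ∞ := by
  obtain ⟨C, hC⟩ := hI.exists_integral_le hF
  have hle : lpwNorm ν p F ≤ ENNReal.ofReal C ^ (1 / p) := iSup₂_le fun y' hy' => by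
    refine ENNReal.rpow_le_rpow ?_ (by positivity)
    calc ∫⁻ ω, (‖F ω‖₊ : ℝ≥0∞) ^ p ∂scalarVar ν y'
        = ∫⁻ ω, ENNReal.ofReal (‖F ω‖ ^ p) ∂scalarVar ν y' := lintegral_congr fun ω => by
          rw [← ENNReal.ofReal_rpow_of_nonneg (norm_nonneg _) hp.le, ofReal_norm, enorm_eq_nnnorm]
      _ = ENNReal.ofReal (∫ ω, ‖F ω‖ ^ p ∂scalarVar ν y') :=
        (ofReal_integral_eq_lintegral_ofReal (hF y') (ae_of_all _ fun ω => by positivity)).symm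
      _ ≤ ENNReal.ofReal C := ENNReal.ofReal_le_ofReal (hC y' hy')
  exact ne_top_of_le_ne_top (ENNReal.rpow_ne_top_of_nonneg (by positivity) ofReal_ne_top) hle

end IndefiniteIntegral

variable [MeasurableSpace Ω] [NormedAddCommGroup X] [CompleteSpace X]
  [NormedAddCommGroup Y] [NormedSpace ℝ Y] [CompleteSpace Y]

theorem indefinite_integrals_uniformly_cauchy (ν : VectorMeasure Ω Y) (p : ℝ) (hp : 1 ≤ p)
    (f : Ω → X) (hf : MemLpw ν p f) (F : ℕ → Ω → X) (hF : ∀ m, MemLpw ν p (F m))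
    (hFi : ∀ m, NuIntegrable ν (fun ω => ‖F m ω‖ ^ p))
    (μm : ℕ → Set Ω → Y)
    (hμ : ∀ m, ∀ E : Set Ω, MeasurableSet E → ∀ y' : Y →L[ℝ] ℝ,
      y' (μm m E) = signedIntegral (scalarSigned ν y') E (fun ω => ‖F m ω‖ ^ p))
    (hconv : Filter.Tendsto (fun m => lpwNorm ν p (fun ω => F m ω - f ω))
      Filter.atTop (nhds 0)) :
    ∀ ε : ℝ, 0 < ε → ∃ N : ℕ, ∀ m ≥ N, ∀ k ≥ N, ∀ E : Set Ω, MeasurableSet E →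
      ‖μm m E - μm k E‖ ≤ ε := by
  have hI : ∀ m, IsIndefiniteIntegral ν (fun ω => ‖F m ω‖ ^ p) (μm m) := hμ
  have hmeas : ∀ m, StronglyMeasurable (F m) := fun m => (hF m).1
  obtain ⟨D, hD, N, hFD⟩ := exists_lpwNorm_le_of_tendsto hp hf.1 hmeas
    (fun m => lpwNorm_ne_top_of_isIndefiniteIntegral (by linarith) (hI m) (hFi m).1) hconv
  set C := ENNReal.ofReal p * (2 * D) ^ (p - 1)
  have hC : C ≠ ∞ := mul_ne_top ofReal_ne_top
    (rpow_ne_top_of_nonneg (by linarith) (mul_ne_top ofNat_ne_top hD))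
  intro ε hε
  refine exists_forall_ge_norm_sub_le_of_enorm_sub_le_add (s := {E | MeasurableSet E})
    (b := fun m => C * lpwNorm ν p (F m - f)) ?_ (N := N) (fun m hm k hk E hE => ?_) hε
  · simpa only [mul_zero] using
      ENNReal.Tendsto.const_mul (m := fun m => lpwNorm ν p (F m - f)) hconv (Or.inr hC)
  refine (hI m).enorm_sub_le (hI k) (hFi m).1 (hFi k).1 (fun y' hy' => ?_) hE
  calc ∫⁻ ω, ‖‖F m ω‖ ^ p - ‖F k ω‖ ^ p‖ₑ ∂scalarVar ν y'
      ≤ ENNReal.ofReal p * (lpwNorm ν p (F m - F k)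
          * (lpwNorm ν p (F m) + lpwNorm ν p (F k)) ^ (p - 1)) :=
        lintegral_enorm_norm_rpow_sub_le_lpwNorm hp (hmeas m) (hmeas k) hy'
    _ ≤ ENNReal.ofReal p
          * ((lpwNorm ν p (F m - f) + lpwNorm ν p (F k - f)) * (2 * D) ^ (p - 1)) := by
        gcongr
        · exact lpwNorm_sub_le_sub_add_sub hp hf.1 (hmeas m) (hmeas k)
        · exact (add_le_add (hFD m hm) (hFD k hk)).trans_eq (two_mul D).symm
    _ = C * lpwNorm ν p (F m - f) + C * lpwNorm ν p (F k - f) := by ring
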